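/- For every unit octonion a ∈ S⁷ and all octonions p, v ∈ 𝕆, one has (p·a)·(conj(a)·v) = (p·(v·a))·conj(a). -/

import Mathlib

noncomputable section

open scoped RealInnerProductSpace

/-- The octonions `𝕆`, realized as the Cayley–Dickson double of the quaternions:
pairs of quaternions `a + I·b`, with the Euclidean (`ℓ²`) inner product space structure. -/
abbrev 𝕆 : Type := WithLp 2 ((Quaternion ℝ) × (Quaternion ℝ))

namespace Oct

/-- The octonion `a + I·b` built from a pair of quaternions `(a, b)`. -/
def mkO (a b : Quaternion ℝ) : 𝕆 := (WithLp.equiv 2 ((Quaternion ℝ) × (Quaternion ℝ))).symm (a, b)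

def fstO (x : 𝕆) : Quaternion ℝ := (WithLp.equiv 2 ((Quaternion ℝ) × (Quaternion ℝ)) x).1
def sndO (x : 𝕆) : Quaternion ℝ := (WithLp.equiv 2 ((Quaternion ℝ) × (Quaternion ℝ)) x).2

/-- Cayley–Dickson multiplication of octonions:
`(a + I·b)(c + I·d) = (ac − d·conj(b)) + I·(cb + conj(a)·d)`. -/
def omul (x y : 𝕆) : 𝕆 :=
  mkO (fstO x * fstO y - sndO y * star (sndO x)) (fstO y * sndO x + star (fstO x) * sndO y)

/-- The octonion unit `1 = (1, 0)`. -/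
def o1 : 𝕆 := mkO 1 0

/-- The octonion `i = (i, 0)`. -/
def oI : 𝕆 := mkO ⟨0, 1, 0, 0⟩ 0

/-- Octonion conjugation, `conj x = 2⟨x,1⟩·1 − x`. -/
def oconj (x : 𝕆) : 𝕆 := (2 * ⟪x, o1⟫) • o1 - x

/-- Powers of an octonion (unambiguous by power-associativity of `𝕆`). -/
def opow (x : 𝕆) : ℕ → 𝕆
  | 0 => o1
  | n + 1 => omul x (opow x n)

/-- The unit sphere `S⁷ ⊆ 𝕆`. -/
def S7 : Set 𝕆 := {x | ‖x‖ = 1}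

/-- The unit sphere `S⁶` of the imaginary octonions (unit octonions orthogonal to `1`). -/
def S6 : Set 𝕆 := {x | ‖x‖ = 1 ∧ ⟪x, o1⟫ = 0}

/-- The tangent space `T_pS⁶ = (span{1,p})^⊥ ⊆ 𝕆`. -/
def TpS (p : 𝕆) : Submodule ℝ 𝕆 := (Submodule.span ℝ {o1, p})ᗮ

/-- `ℝ⁶ = (span{1,i})^⊥ ⊆ 𝕆`. -/
def R6 : Submodule ℝ 𝕆 := TpS oI

lemma oext {x y : 𝕆} (h1 : fstO x = fstO y) (h2 : sndO x = sndO y) : x = y :=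
  (WithLp.equiv 2 ((Quaternion ℝ) × (Quaternion ℝ))).injective (Prod.ext h1 h2)

lemma fstO_mkO (a b : Quaternion ℝ) : fstO (mkO a b) = a := rfl
lemma sndO_mkO (a b : Quaternion ℝ) : sndO (mkO a b) = b := rfl
lemma fstO_add (x y : 𝕆) : fstO (x + y) = fstO x + fstO y := rfl
lemma sndO_add (x y : 𝕆) : sndO (x + y) = sndO x + sndO y := rfl
lemma fstO_smul (r : ℝ) (x : 𝕆) : fstO (r • x) = r • fstO x := rfl
lemma sndO_smul (r : ℝ) (x : 𝕆) : sndO (r • x) = r • sndO x := rfl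
lemma qstar_smul (r : ℝ) (q : Quaternion ℝ) : star (r • q) = r • star q := by simp

/-- Octonion multiplication as an `ℝ`-bilinear map. -/
def omulₗ : 𝕆 →ₗ[ℝ] 𝕆 →ₗ[ℝ] 𝕆 :=
  LinearMap.mk₂ ℝ omul
    (by
      intro x x' y
      apply oext <;>
        simp only [omul, fstO_mkO, sndO_mkO, fstO_add, sndO_add, star_add] <;> noncomm_ring)
    (by
      intro r x y
      apply oext <;>
        simp only [omul, fstO_mkO, sndO_mkO, fstO_smul, sndO_smul, qstar_smul,
          smul_mul_assoc, mul_smul_comm, smul_sub, smul_add])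
    (by
      intro x y y'
      apply oext <;>
        simp only [omul, fstO_mkO, sndO_mkO, fstO_add, sndO_add, star_add] <;> noncomm_ring)
    (by
      intro r x y
      apply oext <;>
        simp only [omul, fstO_mkO, sndO_mkO, fstO_smul, sndO_smul, qstar_smul,
          smul_mul_assoc, mul_smul_comm, smul_sub, smul_add])

/-- Octonion multiplication as a continuous bilinear map. -/
def omulL : 𝕆 →L[ℝ] 𝕆 →L[ℝ] 𝕆 :=
  LinearMap.toContinuousLinearMap
    { toFun := fun x => LinearMap.toContinuousLinearMap (omulₗ x)
      map_add' := by
        intro x x'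
        ext v
        simp
      map_smul' := by
        intro r x
        ext v
        simp }

lemma omulL_apply (x y : 𝕆) : omulL x y = omul x y := rfl

/-- The family `(u, Ju, v, Jv, w, Jw)` associated to `J : 𝕆 → 𝕆` and `u v w : 𝕆`. -/
def JFam (J : 𝕆 → 𝕆) (u v w : 𝕆) : Fin 6 → 𝕆 := ![u, J u, v, J v, w, J w]

/-- The family `f` is a basis of the subspace `V ⊆ 𝕆`. -/
def IsBasisFam (V : Submodule ℝ 𝕆) (f : Fin 6 → 𝕆) : Prop :=
  LinearIndependent ℝ f ∧ Submodule.span ℝ (Set.range f) = V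

/-- Two families are positively related if one is obtained from the other by a matrix of
positive determinant. -/
def PosRelated (f g : Fin 6 → 𝕆) : Prop :=
  ∃ M : Matrix (Fin 6) (Fin 6) ℝ, (∀ k, g k = ∑ l, M k l • f l) ∧ 0 < M.det

/-- `J` and `K` induce the same orientation on the 6-dimensional subspace `V ⊆ 𝕆`: any
basis of `V` of the form `(u, Ju, v, Jv, w, Jw)` is positively related to any basis of `V`
of the form `(u', Ku', v', Kv', w', Kw')`. -/
def SameOri (V : Submodule ℝ 𝕆) (J K : 𝕆 → 𝕆) : Prop :=
  ∀ u v w u' v' w' : 𝕆, IsBasisFam V (JFam J u v w) → IsBasisFam V (JFam K u' v' w') →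
    PosRelated (JFam K u' v' w') (JFam J u v w)

/-- `J` (a linear endomorphism of `𝕆`) restricts to an orthogonal complex structure on the
subspace `V ⊆ 𝕆`: it maps `V` to `V` isometrically, and squares to `-id` on `V`. -/
structure IsOCS (V : Submodule ℝ 𝕆) (J : 𝕆 →ₗ[ℝ] 𝕆) : Prop where
  mapsTo : ∀ v ∈ V, J v ∈ V
  norm : ∀ v ∈ V, ‖J v‖ = ‖v‖
  sq : ∀ v ∈ V, J (J v) = -v

/-- A quaternion subalgebra of `𝕆`: a 4-dimensional real subalgebra containing `1`. -/
def IsQuatSubalg (A : Submodule ℝ 𝕆) : Prop :=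
  o1 ∈ A ∧ (∀ a ∈ A, ∀ b ∈ A, omul a b ∈ A) ∧ Module.finrank ℝ A = 4

lemma inner_o1_o1 : ⟪o1, o1⟫ = 1 := by
  show (inner ℝ (mkO 1 0).fst (mkO 1 0).fst : ℝ) + inner ℝ (mkO 1 0).snd (mkO 1 0).snd = 1
  simp [mkO, Quaternion.inner_self]

lemma norm_o1 : ‖o1‖ = 1 := by
  rw [@norm_eq_sqrt_real_inner, inner_o1_o1, Real.sqrt_one]

lemma inner_oI_oI : ⟪oI, oI⟫ = 1 := by
  show (inner ℝ (mkO ⟨0,1,0,0⟩ 0).fst (mkO ⟨0,1,0,0⟩ 0).fst : ℝ)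
      + inner ℝ (mkO ⟨0,1,0,0⟩ 0).snd (mkO ⟨0,1,0,0⟩ 0).snd = 1
  simp [mkO, Quaternion.inner_self, Quaternion.normSq_def]
  erw [Quaternion.inner_def]
  show ((⟨0,1,0,0⟩ : Quaternion ℝ) * star ⟨0,1,0,0⟩).re = 1
  simp

lemma norm_oI : ‖oI‖ = 1 := by
  rw [@norm_eq_sqrt_real_inner, inner_oI_oI, Real.sqrt_one]

lemma inner_oI_o1 : ⟪oI, o1⟫ = 0 := by
  show (inner ℝ (mkO ⟨0,1,0,0⟩ 0).fst (mkO 1 0).fst : ℝ)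
      + inner ℝ (mkO ⟨0,1,0,0⟩ 0).snd (mkO 1 0).snd = 0
  simp [mkO, Quaternion.inner_def]
  erw [Quaternion.inner_def]
  show ((⟨0,1,0,0⟩ : Quaternion ℝ) * star 1).re = 0
  simp

lemma omul_one (x : 𝕆) : omul x o1 = x := by
  apply oext <;> simp [omul, o1, fstO_mkO, sndO_mkO]

lemma oconj_o1 : oconj o1 = o1 := by
  unfold oconj
  rw [inner_o1_o1, mul_one, two_smul]
  abel

/-- `1 ∈ S⁷`. -/
lemma o1_mem_S7 : o1 ∈ S7 := norm_o1

/-- `i ∈ S⁶`. -/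
lemma oI_mem_S6 : oI ∈ S6 := ⟨norm_oI, inner_oI_o1⟩

end Oct

/-!
Both sides are polynomial in the quaternion coordinates of `p`, `a` and `v`. The identity already
holds in the Cayley–Dickson double of the quaternions `ℍ[R]` over any commutative ring `R`,
where it is checked by expanding every product into the scalar components.
-/

open Quaternion

namespace CayleyDickson

variable {R : Type*} [CommRing R]

def mul (x y : ℍ[R] × ℍ[R]) : ℍ[R] × ℍ[R] :=
  (x.1 * y.1 - y.2 * star x.2, y.1 * x.2 + star x.1 * y.2)

def conj (x : ℍ[R] × ℍ[R]) : ℍ[R] × ℍ[R] := (star x.1, -x.2)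

theorem mul_mul_conj_mul (p a v : ℍ[R] × ℍ[R]) :
    mul (mul p a) (mul (conj a) v) = mul (mul p (mul v a)) (conj a) := by
  obtain ⟨p₁, p₂⟩ := p
  obtain ⟨a₁, a₂⟩ := a
  obtain ⟨v₁, v₂⟩ := v
  simp only [mul, conj, star_star, Prod.mk.injEq]
  constructor <;> ext <;>
    simp only [re_mul, imI_mul, imJ_mul, imK_mul, re_add, imI_add, imJ_add, imK_add,
      re_sub, imI_sub, imJ_sub, imK_sub, re_neg, imI_neg, imJ_neg, imK_neg,
      re_star, imI_star, imJ_star, imK_star] <;>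
    ring

end CayleyDickson

namespace Oct

local notation "toPair" => WithLp.equiv 2 (ℍ[ℝ] × ℍ[ℝ])

lemma omul_eq_cayleyDickson_mul (x y : 𝕆) :
    omul x y = (toPair).symm (CayleyDickson.mul (toPair x) (toPair y)) := rfl

lemma inner_o1 (x : 𝕆) : ⟪x, o1⟫ = (fstO x).re := by
  show inner ℝ (fstO x) 1 + inner ℝ (sndO x) 0 = (fstO x).re
  simp [Quaternion.inner_def]

lemma oconj_eq_cayleyDickson_conj (x : 𝕆) :
    oconj x = (toPair).symm (CayleyDickson.conj (toPair x)) := by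
  apply oext
  · show (2 * ⟪x, o1⟫) • (1 : ℍ[ℝ]) - fstO x = star (fstO x)
    rw [inner_o1, star_eq_two_re_sub, ← Algebra.algebraMap_eq_smul_one, algebraMap_def]
  · show (2 * ⟪x, o1⟫) • (0 : ℍ[ℝ]) - sndO x = -sndO x
    simp

end Oct

open Oct in
theorem moufang_identity_general (a : 𝕆) (p v : 𝕆) :
    omul (omul p a) (omul (oconj a) v) = omul (omul p (omul v a)) (oconj a) := by
  simp only [omul_eq_cayleyDickson_mul, oconj_eq_cayleyDickson_conj, Equiv.apply_symm_apply,
    CayleyDickson.mul_mul_conj_mul]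

open Oct in
/-- For a unit octonion `a` and all octonions `p, v`:
`(p·a)(conj(a)·v) = (p(v·a))·conj(a)` (a consequence of the Moufang laws). -/
theorem moufang_identity (a : 𝕆) (ha : ‖a‖ = 1) (p v : 𝕆) :
    omul (omul p a) (omul (oconj a) v) = omul (omul p (omul v a)) (oconj a) :=
  moufang_identity_general a p v
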